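/- arXiv:1702.00152 — 3 statements merged into one kernel-verified Lean document; each statement's English description precedes it below -/
import Mathlib

section
/- Put–call parity holds for the MFM pricing formulas: for all 0≤t<T and S>0, C(t,S) − P(t,S) = S − K·e^{−r(T−t)}. -/
/-!
Each Poisson-weighted term is a Black–Scholes call or put with discounted strike
`K' = K e^{-r(T-t)}`, and termwise `S Φ(d₁) - K' Φ(d₂) - (K' Φ(-d₂) - S Φ(-d₁)) = S - K'`
since `Φ(-x) = 1 - Φ(x)`. The weights sum to `1` and the terms are bounded, so the two series
can be subtracted termwise and the parity survives the mixing.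
-/

open MeasureTheory ProbabilityTheory Real Filter

/-- The standard normal cumulative distribution function `Φ`. -/
noncomputable def stdNormalCDF (x : ℝ) : ℝ :=
  ((ProbabilityTheory.gaussianReal 0 1) (Set.Iic x)).toReal

theorem stdNormalCDF_eq_measureReal (x : ℝ) :
    stdNormalCDF x = (gaussianReal 0 1).real (Set.Iic x) := rfl

theorem abs_stdNormalCDF_le_one (x : ℝ) : |stdNormalCDF x| ≤ 1 := by
  rw [stdNormalCDF_eq_measureReal, abs_of_nonneg measureReal_nonneg]
  exact measureReal_le_one

theorem stdNormalCDF_neg (x : ℝ) : stdNormalCDF (-x) = 1 - stdNormalCDF x := by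
  have hsymm : (gaussianReal 0 1).map (fun y ↦ -y) = gaussianReal 0 1 := by
    simpa using gaussianReal_map_neg (μ := 0) (v := 1)
  have hatom : gaussianReal 0 1 {x} = 0 :=
    gaussianReal_absolutelyContinuous 0 one_ne_zero Real.volume_singleton
  calc stdNormalCDF (-x)
      = ((gaussianReal 0 1).map (fun y ↦ -y)).real (Set.Iic (-x)) := by
        rw [hsymm, stdNormalCDF_eq_measureReal]
    _ = (gaussianReal 0 1).real (Set.Ici x) := by
        rw [map_measureReal_apply (by fun_prop) measurableSet_Iic]
        congr 1
        ext y
        simp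
    _ = (gaussianReal 0 1).real (Set.Iic x)ᶜ := by
        rw [Set.compl_Iic, measureReal_congr (Ioi_ae_eq_Ici' hatom)]
    _ = 1 - stdNormalCDF x := probReal_compl_eq_one_sub measurableSet_Iic

theorem abs_mul_stdNormalCDF_sub_mul_stdNormalCDF_le (A B a b : ℝ) :
    |A * stdNormalCDF a - B * stdNormalCDF b| ≤ |A| + |B| := by
  have bound (C c : ℝ) : |C * stdNormalCDF c| ≤ |C| := by
    rw [abs_mul]
    exact mul_le_of_le_one_right (abs_nonneg C) (abs_stdNormalCDF_le_one c)
  exact (abs_sub _ _).trans (add_le_add (bound A a) (bound B b))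

theorem hasSum_exp_neg_mul_pow_div_factorial (x : ℝ) :
    HasSum (fun n : ℕ ↦ exp (-x) * x ^ n / n.factorial) 1 := by
  have h := (NormedSpace.expSeries_div_hasSum_exp x).mul_left (exp (-x))
  rw [← Real.exp_eq_exp_ℝ, ← Real.exp_add, neg_add_cancel, Real.exp_zero] at h
  simpa only [mul_div_assoc] using h

theorem Summable.mul_of_abs_le {w f : ℕ → ℝ} (hw : Summable w) {M : ℝ} (hf : ∀ n, |f n| ≤ M) :
    Summable (fun n ↦ w n * f n) :=
  (hw.abs.mul_right M).of_norm_bounded fun n ↦ by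
    rw [Real.norm_eq_abs, abs_mul]
    exact mul_le_mul_of_nonneg_left (hf n) (abs_nonneg _)

theorem tsum_mul_sub_tsum_mul_of_hasSum_one {w c p : ℕ → ℝ} {D M : ℝ} (hw : HasSum w 1)
    (hc : ∀ n, |c n| ≤ M) (hp : ∀ n, |p n| ≤ M) (hcp : ∀ n, c n - p n = D) :
    ∑' n, w n * c n - ∑' n, w n * p n = D := by
  rw [← (hw.summable.mul_of_abs_le hc).tsum_sub (hw.summable.mul_of_abs_le hp)]
  simp_rw [← mul_sub, hcp, tsum_mul_right, hw.tsum_eq, one_mul]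

theorem mfm_put_call_parity_general
    (S K r t T : ℝ)
    (lam' : ℝ)
    (d1 d2 w : ℕ → ℝ)
    (hw : ∀ n, w n = Real.exp (-lam' * (T - t)) * (lam' * (T - t)) ^ n / n.factorial)
    (C P : ℝ)
    (hC : C = ∑' n, w n
      * (S * stdNormalCDF (d1 n) - K * Real.exp (-r * (T - t)) * stdNormalCDF (d2 n)))
    (hP : P = ∑' n, w n
      * (K * Real.exp (-r * (T - t)) * stdNormalCDF (-(d2 n)) - S * stdNormalCDF (-(d1 n)))) :
    C - P = S - K * Real.exp (-r * (T - t)) := by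
  set D := K * Real.exp (-r * (T - t))
  have hw_sum : HasSum w 1 := by
    rw [show w = _ from funext hw]
    simpa only [neg_mul] using hasSum_exp_neg_mul_pow_div_factorial (lam' * (T - t))
  rw [hC, hP]
  refine tsum_mul_sub_tsum_mul_of_hasSum_one hw_sum (M := |S| + |D|)
    (fun _ ↦ abs_mul_stdNormalCDF_sub_mul_stdNormalCDF_le _ _ _ _)
    (fun n ↦ (abs_mul_stdNormalCDF_sub_mul_stdNormalCDF_le _ _ _ _).trans_eq (add_comm _ _))
    fun n ↦ ?_
  rw [stdNormalCDF_neg, stdNormalCDF_neg]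
  ring

/-- Put–call parity for the MFM pricing formulas: `C(t,S) - P(t,S) = S - K e^{-r(T-t)}`. -/
theorem mfm_put_call_parity
    (S K r t T σ σH Hu μJ σJ lam k δt : ℝ)
    (hS : 0 < S) (hK : 0 < K) (ht : 0 ≤ t) (htT : t < T)
    (hσ : 0 < σ) (hσH : 0 < σH) (hH1 : 3 / 4 < Hu) (hH2 : Hu < 1)
    (hσJ : 0 < σJ) (hlam : 0 < lam) (hk : 0 ≤ k) (hδt : 0 < δt)
    (σhat2 lam' : ℝ)
    (hσhat2 : σhat2 = σ ^ 2 + σH ^ 2 * δt ^ (2 * Hu - 1)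
      + k * Real.sqrt ((2 / Real.pi) * (σ ^ 2 / δt + σH ^ 2 * δt ^ (2 * Hu - 2))))
    (hlam' : lam' = lam * Real.exp (μJ + σJ ^ 2 / 2))
    (σn rn d1 d2 w : ℕ → ℝ)
    (hσn : ∀ n, σn n = Real.sqrt (σhat2 + n * σJ ^ 2 / (T - t)))
    (hrn : ∀ n, rn n = r - lam * (Real.exp (μJ + σJ ^ 2 / 2) - 1)
      + n * (μJ + σJ ^ 2 / 2) / (T - t))
    (hd1 : ∀ n, d1 n = (Real.log (S / K) + rn n * (T - t) + (σn n) ^ 2 * (T - t) / 2)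
      / (σn n * Real.sqrt (T - t)))
    (hd2 : ∀ n, d2 n = d1 n - σn n * Real.sqrt (T - t))
    (hw : ∀ n, w n = Real.exp (-lam' * (T - t)) * (lam' * (T - t)) ^ n / n.factorial)
    (C P : ℝ)
    (hC : C = ∑' n, w n
      * (S * stdNormalCDF (d1 n) - K * Real.exp (-r * (T - t)) * stdNormalCDF (d2 n)))
    (hP : P = ∑' n, w n
      * (K * Real.exp (-r * (T - t)) * stdNormalCDF (-(d2 n)) - S * stdNormalCDF (-(d1 n)))) :
    C - P = S - K * Real.exp (-r * (T - t)) :=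
  mfm_put_call_parity_general S K r t T lam' d1 d2 w hw C P hC hP
end

section
/- The MFM call price satisfies the zero-asset boundary condition: for fixed 0≤t<T, C(t,S) → 0 as S → 0⁺. -/
open MeasureTheory ProbabilityTheory Real Filter

open Topology

/-!
Each Poisson-weighted summand is a Black–Scholes-type term `S Φ(d₁) - K e^{-rτ} Φ(d₂)`. As
`S → 0⁺` the first part is squeezed by `S`, while `d₂ ~ log S / (σₙ √τ) → -∞` (the effective
volatility `σₙ` is positive), so `Φ(d₂) → 0`. Every summand is bounded by `1 + K e^{-rτ}` for
`S < 1` and the Poisson weights are summable, so dominated convergence (Tannery's theorem) lets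
the limit pass through the series.
-/

lemma stdNormalCDF_eq_cdf (x : ℝ) : stdNormalCDF x = cdf (gaussianReal 0 1) x :=
  (cdf_eq_real _ x).symm

lemma stdNormalCDF_nonneg (x : ℝ) : 0 ≤ stdNormalCDF x :=
  stdNormalCDF_eq_cdf x ▸ cdf_nonneg _ x

lemma stdNormalCDF_le_one (x : ℝ) : stdNormalCDF x ≤ 1 :=
  stdNormalCDF_eq_cdf x ▸ cdf_le_one _ x

lemma tendsto_stdNormalCDF_atBot : Tendsto stdNormalCDF atBot (𝓝 0) :=
  (tendsto_cdf_atBot (gaussianReal 0 1)).congr fun x => (stdNormalCDF_eq_cdf x).symm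

lemma abs_mul_stdNormalCDF_sub_mul_le (S D x y : ℝ) :
    |S * stdNormalCDF x - D * stdNormalCDF y| ≤ |S| + |D| := by
  have hΦ : ∀ z, |stdNormalCDF z| ≤ 1 := fun z =>
    abs_le.2 ⟨by linarith [stdNormalCDF_nonneg z], stdNormalCDF_le_one z⟩
  calc |S * stdNormalCDF x - D * stdNormalCDF y|
      ≤ |S| * |stdNormalCDF x| + |D| * |stdNormalCDF y| := by
        rw [← abs_mul, ← abs_mul]; exact abs_sub _ _
    _ ≤ |S| * 1 + |D| * 1 := by gcongr <;> exact hΦ _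
    _ = |S| + |D| := by ring

lemma tendsto_mul_stdNormalCDF_sub_mul_nhdsGT_zero {d₁ d₂ : ℝ → ℝ}
    (hd₂ : Tendsto d₂ (𝓝[>] 0) atBot) (D : ℝ) :
    Tendsto (fun S => S * stdNormalCDF (d₁ S) - D * stdNormalCDF (d₂ S)) (𝓝[>] 0) (𝓝 0) := by
  have hfirst : Tendsto (fun S => S * stdNormalCDF (d₁ S)) (𝓝[>] 0) (𝓝 0) := by
    refine squeeze_zero' ?_ ?_ (tendsto_nhdsWithin_of_tendsto_nhds tendsto_id)
    · filter_upwards [self_mem_nhdsWithin] with S hS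
      exact mul_nonneg (le_of_lt hS) (stdNormalCDF_nonneg _)
    · filter_upwards [self_mem_nhdsWithin] with S hS
      exact mul_le_of_le_one_right (le_of_lt hS) (stdNormalCDF_le_one _)
  simpa using hfirst.sub ((tendsto_stdNormalCDF_atBot.comp hd₂).const_mul D)

lemma tendsto_log_div_add_div_nhdsGT_zero_atBot {K a : ℝ} (hK : K ≠ 0) (ha : 0 < a) (b : ℝ) :
    Tendsto (fun S => (log (S / K) + b) / a) (𝓝[>] 0) atBot := by
  refine Tendsto.atBot_div_const ha (tendsto_atBot_add_const_right _ b ?_)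
  refine (tendsto_atBot_add_const_right _ (-log K) tendsto_log_nhdsGT_zero).congr' ?_
  filter_upwards [self_mem_nhdsWithin] with S hS
  rw [log_div (ne_of_gt hS) hK, sub_eq_add_neg]

lemma tendsto_tsum_mul_of_bounded {α : Type*} {l : Filter α} {w : ℕ → ℝ} (hw : Summable w)
    {f : ℕ → α → ℝ} (hf : ∀ n, Tendsto (f n) l (𝓝 0)) {B : ℝ}
    (hB : ∀ᶠ x in l, ∀ n, |f n x| ≤ B) :
    Tendsto (fun x => ∑' n, w n * f n x) l (𝓝 0) := by
  have h := tendsto_tsum_of_dominated_convergence (f := fun x n => w n * f n x)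
    (hw.abs.mul_right B) (fun n => by simpa using (hf n).const_mul (w n)) ?_
  · simpa using h
  filter_upwards [hB] with x hx n
  rw [Real.norm_eq_abs, abs_mul]
  exact mul_le_mul_of_nonneg_left (hx n) (abs_nonneg _)

lemma summable_exp_mul_pow_div_factorial (c x : ℝ) :
    Summable fun n : ℕ => exp c * x ^ n / n.factorial := by
  simpa only [mul_div_assoc] using (summable_pow_div_factorial x).mul_left (exp c)

lemma sq_add_mul_rpow_add_mul_sqrt_pos {σ σH δt k : ℝ} (hσ : σ ≠ 0) (hδt : 0 ≤ δt) (hk : 0 ≤ k)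
    (p x : ℝ) : 0 < σ ^ 2 + σH ^ 2 * δt ^ p + k * sqrt x := by
  have := rpow_nonneg hδt p
  positivity

theorem mfm_call_zero_asset_boundary_general
    (K r t T σ σH Hu σJ k δt : ℝ)
    (hK : 0 < K) (htT : t < T)
    (hσ : 0 < σ) (hk : 0 ≤ k) (hδt : 0 < δt)
    (σhat2 lam' : ℝ)
    (hσhat2 : σhat2 = σ ^ 2 + σH ^ 2 * δt ^ (2 * Hu - 1)
      + k * Real.sqrt ((2 / Real.pi) * (σ ^ 2 / δt + σH ^ 2 * δt ^ (2 * Hu - 2))))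
    (σn rn w : ℕ → ℝ) (d1 d2 : ℕ → ℝ → ℝ)
    (hσn : ∀ n, σn n = Real.sqrt (σhat2 + n * σJ ^ 2 / (T - t)))
    (hd1 : ∀ n S, 0 < S → d1 n S = (Real.log (S / K) + rn n * (T - t)
      + (σn n) ^ 2 * (T - t) / 2) / (σn n * Real.sqrt (T - t)))
    (hd2 : ∀ n S, 0 < S → d2 n S = d1 n S - σn n * Real.sqrt (T - t))
    (hw : ∀ n, w n = Real.exp (-lam' * (T - t)) * (lam' * (T - t)) ^ n / n.factorial)
    (C : ℝ → ℝ)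
    (hC : ∀ S, 0 < S → C S = ∑' n, w n
      * (S * stdNormalCDF (d1 n S) - K * Real.exp (-r * (T - t)) * stdNormalCDF (d2 n S))) :
    Tendsto C (nhdsWithin 0 (Set.Ioi 0)) (nhds 0) := by
  have hτ : 0 < T - t := sub_pos.2 htT
  have hσhat2_pos : 0 < σhat2 := hσhat2 ▸ sq_add_mul_rpow_add_mul_sqrt_pos hσ.ne' hδt.le hk _ _
  have hσn_pos : ∀ n, 0 < σn n := fun n => hσn n ▸ sqrt_pos.2 (by positivity)
  have hd2_atBot : ∀ n, Tendsto (d2 n) (𝓝[>] 0) atBot := by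
    intro n
    have hlog := tendsto_log_div_add_div_nhdsGT_zero_atBot hK.ne'
      (mul_pos (hσn_pos n) (sqrt_pos.2 hτ)) (rn n * (T - t) + σn n ^ 2 * (T - t) / 2)
    refine (tendsto_atBot_add_const_right _ (-(σn n * sqrt (T - t))) hlog).congr' ?_
    filter_upwards [self_mem_nhdsWithin] with S hS
    rw [hd2 n S hS, hd1 n S hS]
    ring
  have hw_summable : Summable w := by
    simpa only [← hw] using summable_exp_mul_pow_div_factorial (-lam' * (T - t)) (lam' * (T - t))
  have hbound : ∀ᶠ S in 𝓝[>] (0 : ℝ), ∀ n,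
      |S * stdNormalCDF (d1 n S) - K * exp (-r * (T - t)) * stdNormalCDF (d2 n S)|
        ≤ 1 + |K * exp (-r * (T - t))| := by
    filter_upwards [Ioo_mem_nhdsGT zero_lt_one] with S hS n
    have := abs_mul_stdNormalCDF_sub_mul_le S (K * exp (-r * (T - t))) (d1 n S) (d2 n S)
    rw [abs_of_pos hS.1] at this
    linarith [hS.2]
  refine (tendsto_tsum_mul_of_bounded hw_summable
    (fun n => tendsto_mul_stdNormalCDF_sub_mul_nhdsGT_zero (hd2_atBot n) _) hbound).congr' ?_
  filter_upwards [self_mem_nhdsWithin] with S hS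
  exact (hC S hS).symm

/-- Zero-asset boundary condition for the MFM call price: `C(t,S) → 0` as `S → 0⁺`. -/
theorem mfm_call_zero_asset_boundary
    (K r t T σ σH Hu μJ σJ lam k δt : ℝ)
    (hK : 0 < K) (ht : 0 ≤ t) (htT : t < T)
    (hσ : 0 < σ) (hσH : 0 < σH) (hH1 : 3 / 4 < Hu) (hH2 : Hu < 1)
    (hσJ : 0 < σJ) (hlam : 0 < lam) (hk : 0 ≤ k) (hδt : 0 < δt)
    (σhat2 lam' : ℝ)
    (hσhat2 : σhat2 = σ ^ 2 + σH ^ 2 * δt ^ (2 * Hu - 1)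
      + k * Real.sqrt ((2 / Real.pi) * (σ ^ 2 / δt + σH ^ 2 * δt ^ (2 * Hu - 2))))
    (hlam' : lam' = lam * Real.exp (μJ + σJ ^ 2 / 2))
    (σn rn w : ℕ → ℝ) (d1 d2 : ℕ → ℝ → ℝ)
    (hσn : ∀ n, σn n = Real.sqrt (σhat2 + n * σJ ^ 2 / (T - t)))
    (hrn : ∀ n, rn n = r - lam * (Real.exp (μJ + σJ ^ 2 / 2) - 1)
      + n * (μJ + σJ ^ 2 / 2) / (T - t))
    (hd1 : ∀ n S, 0 < S → d1 n S = (Real.log (S / K) + rn n * (T - t)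
      + (σn n) ^ 2 * (T - t) / 2) / (σn n * Real.sqrt (T - t)))
    (hd2 : ∀ n S, 0 < S → d2 n S = d1 n S - σn n * Real.sqrt (T - t))
    (hw : ∀ n, w n = Real.exp (-lam' * (T - t)) * (lam' * (T - t)) ^ n / n.factorial)
    (C : ℝ → ℝ)
    (hC : ∀ S, 0 < S → C S = ∑' n, w n
      * (S * stdNormalCDF (d1 n S) - K * Real.exp (-r * (T - t)) * stdNormalCDF (d2 n S))) :
    Tendsto C (nhdsWithin 0 (Set.Ioi 0)) (nhds 0) :=
  mfm_call_zero_asset_boundary_general K r t T σ σH Hu σJ k δt hK htT hσ hk hδt σhat2 lam' hσhat2 σn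
    rn w d1 d2 hσn hd1 hd2 hw C hC
end

section
/- Fix M>1. For δt ∈ (0, 1/M) define σ̂²(δt) = σ² + σ_H²(δt)^{2H−1} + k·√((2/π)(σ²/δt + σ_H²(δt)^{2H−2})). Then σ̂²(δt) → ∞ as δt → 0⁺, and there exists k₀ > 0 such that for all 0 < k < k₀ the function σ̂² attains its minimum on (0, 1/M): there exists δt* ∈ (0, 1/M) with σ̂²(δt*) ≤ σ̂²(δt) for all δt ∈ (0, 1/M). -/
/-!
Write `σ̂² = B + k·R`, where `B(δt) = σ² + σ_H² δt^{2H-1}` is strictly increasing and the cost rate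
`R` blows up like `δt^{-1/2}` at `0⁺`. Fix `0 < a < b < 1/M`. For small `k` the cost term at `a` is
smaller than the gap `B(b) - B(a)`, so `σ̂²(a) < B(b) ≤ σ̂²(δt)` on `[b, 1/M)`; near `0` the blow-up
puts `σ̂²` above `σ̂²(a)` as well. A minimum of `σ̂²` on a compact interval around `[a, b]` is
therefore a minimum on all of `(0, 1/M)`.
-/

open Real Filter Set Topology

theorem exists_isMinOn_Ioo_of_tendsto_atTop {F : ℝ → ℝ} {x₀ a b c : ℝ}
    (ha : a ∈ Ioc x₀ b) (hbc : b < c) (hF : ContinuousOn F (Ioc x₀ b))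
    (hlim : Tendsto F (𝓝[>] x₀) atTop) (htail : ∀ t ∈ Ioo b c, F a ≤ F t) :
    ∃ s ∈ Ioo x₀ c, IsMinOn F (Ioo x₀ c) s := by
  obtain ⟨u, hu, hFu⟩ :=
    mem_nhdsGT_iff_exists_Ioo_subset.mp (hlim.eventually (eventually_gt_atTop (F a)))
  have hIcc : Icc (min u a) b ⊆ Ioc x₀ b := fun t ht =>
    ⟨(lt_min hu ha.1).trans_le ht.1, ht.2⟩
  obtain ⟨s, hs, hmin⟩ := isCompact_Icc.exists_isMinOn
    (nonempty_Icc.mpr ((min_le_right u a).trans ha.2)) (hF.mono hIcc)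
  have hsa : F s ≤ F a := hmin ⟨min_le_right u a, ha.2⟩
  refine ⟨s, ⟨(hIcc hs).1, hs.2.trans_lt hbc⟩, fun t ht => ?_⟩
  rcases lt_or_ge t (min u a) with hta | hta
  · exact hsa.trans (hFu ⟨ht.1, hta.trans_le (min_le_left u a)⟩).le
  rcases le_or_gt t b with htb | htb
  · exact hmin ⟨hta, htb⟩
  · exact hsa.trans (htail t ⟨htb, ht.2⟩)

namespace ModifiedVolatility

variable {σ σH H k a t : ℝ}

noncomputable def baseVariance (σ σH H δt : ℝ) : ℝ :=
  σ ^ 2 + σH ^ 2 * δt ^ (2 * H - 1)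

/-- `√(2/π)` times the standard deviation of a price increment over `δt`, divided by `δt`: the
expected absolute increment per unit time, i.e. the rate at which transaction costs accrue. -/
noncomputable def costRate (σ σH H δt : ℝ) : ℝ :=
  √((2 / π) * (σ ^ 2 / δt + σH ^ 2 * δt ^ (2 * H - 2)))

noncomputable def modifiedVolatility (σ σH H k δt : ℝ) : ℝ :=
  baseVariance σ σH H δt + k * costRate σ σH H δt

theorem baseVariance_strictMonoOn (hσH : σH ≠ 0) (hH : 1 / 2 < H) :
    StrictMonoOn (baseVariance σ σH H) (Ici 0) := fun _ hx _ hy hxy =>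
  add_lt_add_right (mul_lt_mul_of_pos_left
    (strictMonoOn_rpow_Ici_of_exponent_pos (by linarith) hx hy hxy) (by positivity)) _

theorem baseVariance_le_modifiedVolatility (hk : 0 ≤ k) :
    baseVariance σ σH H t ≤ modifiedVolatility σ σH H k t :=
  le_add_of_nonneg_right (mul_nonneg hk (sqrt_nonneg _))

theorem tendsto_costRate_nhdsGT_zero (hσ : σ ≠ 0) :
    Tendsto (costRate σ σH H) (𝓝[>] 0) atTop := by
  have hdiv : Tendsto (fun δt : ℝ => σ ^ 2 / δt) (𝓝[>] 0) atTop := by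
    simpa only [div_eq_mul_inv] using
      tendsto_inv_nhdsGT_zero.const_mul_atTop (by positivity)
  have hsum : Tendsto (fun δt : ℝ => σ ^ 2 / δt + σH ^ 2 * δt ^ (2 * H - 2)) (𝓝[>] 0) atTop := by
    refine tendsto_atTop_add_right_of_le' _ 0 hdiv ?_
    filter_upwards [self_mem_nhdsWithin] with δt hδt
    exact mul_nonneg (sq_nonneg σH) (rpow_nonneg (le_of_lt hδt) _)
  exact tendsto_sqrt_atTop.comp (hsum.const_mul_atTop (by positivity))

theorem tendsto_modifiedVolatility_nhdsGT_zero (hσ : σ ≠ 0) (hk : 0 < k) :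
    Tendsto (modifiedVolatility σ σH H k) (𝓝[>] 0) atTop := by
  refine tendsto_atTop_add_left_of_le' _ (σ ^ 2) ?_
    ((tendsto_costRate_nhdsGT_zero hσ).const_mul_atTop hk)
  filter_upwards [self_mem_nhdsWithin] with δt hδt
  exact le_add_of_nonneg_right (mul_nonneg (sq_nonneg σH) (rpow_nonneg (le_of_lt hδt) _))

theorem continuousOn_modifiedVolatility :
    ContinuousOn (modifiedVolatility σ σH H k) (Ioi 0) := by
  intro δt hδt
  apply ContinuousAt.continuousWithinAt
  have hδt : δt ≠ 0 := (mem_Ioi.mp hδt).ne'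
  unfold modifiedVolatility baseVariance costRate
  fun_prop (disch := simp [hδt])

theorem exists_pos_forall_modifiedVolatility_lt {x : ℝ} (hax : baseVariance σ σH H a < x) :
    ∃ k₀ > 0, ∀ k < k₀, modifiedVolatility σ σH H k a < x := by
  have hcont : Continuous fun k => modifiedVolatility σ σH H k a := by
    unfold modifiedVolatility; fun_prop
  have hlt : ∀ᶠ k in 𝓝[>] 0, modifiedVolatility σ σH H k a < x :=
    nhdsWithin_le_nhds <| hcont.tendsto 0 |>.eventually <| eventually_lt_nhds <| by
      simpa [modifiedVolatility] using hax
  obtain ⟨k₀, hk₀x, hk₀⟩ := (hlt.and self_mem_nhdsWithin).exists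
  refine ⟨k₀, hk₀, fun k hk => lt_of_le_of_lt ?_ hk₀x⟩
  exact add_le_add_right (mul_le_mul_of_nonneg_right hk.le (sqrt_nonneg _)) _

end ModifiedVolatility

open ModifiedVolatility in
theorem mfm_modified_volatility_min_attained_general
    (σ σH Hu M : ℝ)
    (hσ : 0 < σ) (hσH : 0 < σH) (hH1 : 3 / 4 < Hu) (hM : 1 < M)
    (σhat2 : ℝ → ℝ → ℝ)
    (hσhat2 : ∀ k δt, 0 < δt → σhat2 k δt = σ ^ 2 + σH ^ 2 * δt ^ (2 * Hu - 1)
      + k * Real.sqrt ((2 / Real.pi) * (σ ^ 2 / δt + σH ^ 2 * δt ^ (2 * Hu - 2)))) :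
    (∀ k, 0 < k → Tendsto (fun δt => σhat2 k δt) (nhdsWithin 0 (Set.Ioi 0)) atTop) ∧
    ∃ k₀ > 0, ∀ k, 0 < k → k < k₀ →
      ∃ δs ∈ Set.Ioo 0 (1 / M), ∀ δt ∈ Set.Ioo 0 (1 / M), σhat2 k δs ≤ σhat2 k δt := by
  have heq (k : ℝ) : EqOn (σhat2 k) (modifiedVolatility σ σH Hu k) (Ioi 0) :=
    fun δt hδt => hσhat2 k δt hδt
  refine ⟨fun k hk => ?_, ?_⟩
  · exact (tendsto_modifiedVolatility_nhdsGT_zero hσ.ne' hk).congr'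
      (eventuallyEq_nhdsWithin_of_eqOn (heq k)).symm
  set c := 1 / M
  have hc : 0 < c := one_div_pos.mpr (by linarith)
  have hb : 0 < c / 2 := half_pos hc
  have ha : 0 < c / 2 / 2 := half_pos hb
  have hmono : StrictMonoOn (baseVariance σ σH Hu) (Ici 0) :=
    baseVariance_strictMonoOn hσH.ne' (by linarith)
  obtain ⟨k₀, hk₀, hk₀a⟩ := exists_pos_forall_modifiedVolatility_lt
    (hmono ha.le hb.le (half_lt_self hb))
  refine ⟨k₀, hk₀, fun k hk hkk₀ => ?_⟩
  have htail (t : ℝ) (ht : t ∈ Ioo (c / 2) c) :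
      modifiedVolatility σ σH Hu k (c / 2 / 2) ≤ modifiedVolatility σ σH Hu k t :=
    calc _ ≤ baseVariance σ σH Hu (c / 2) := (hk₀a k hkk₀).le
      _ ≤ baseVariance σ σH Hu t := hmono.monotoneOn hb.le (hb.trans ht.1).le ht.1.le
      _ ≤ _ := baseVariance_le_modifiedVolatility hk.le
  obtain ⟨s, hs, hmin⟩ := exists_isMinOn_Ioo_of_tendsto_atTop ⟨ha, (half_lt_self hb).le⟩
    (half_lt_self hc) (continuousOn_modifiedVolatility.mono Ioc_subset_Ioi_self)
    (tendsto_modifiedVolatility_nhdsGT_zero hσ.ne' hk) htail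
  refine ⟨s, hs, fun t ht => ?_⟩
  rw [heq k hs.1, heq k ht.1]
  exact hmin ht

/-- The modified volatility `σ̂²(δt)` blows up as `δt → 0⁺` (for any transaction cost `k > 0`),
and for all sufficiently small `k > 0` it attains its minimum on `(0, 1/M)`. -/
theorem mfm_modified_volatility_min_attained
    (σ σH Hu M : ℝ)
    (hσ : 0 < σ) (hσH : 0 < σH) (hH1 : 3 / 4 < Hu) (hH2 : Hu < 1) (hM : 1 < M)
    (σhat2 : ℝ → ℝ → ℝ)
    (hσhat2 : ∀ k δt, 0 < δt → σhat2 k δt = σ ^ 2 + σH ^ 2 * δt ^ (2 * Hu - 1)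
      + k * Real.sqrt ((2 / Real.pi) * (σ ^ 2 / δt + σH ^ 2 * δt ^ (2 * Hu - 2)))) :
    (∀ k, 0 < k → Tendsto (fun δt => σhat2 k δt) (nhdsWithin 0 (Set.Ioi 0)) atTop) ∧
    ∃ k₀ > 0, ∀ k, 0 < k → k < k₀ →
      ∃ δs ∈ Set.Ioo 0 (1 / M), ∀ δt ∈ Set.Ioo 0 (1 / M), σhat2 k δs ≤ σhat2 k δt :=
  mfm_modified_volatility_min_attained_general σ σH Hu M hσ hσH hH1 hM σhat2 hσhat2
end
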